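/- Let X and Y be mm-spaces and ε ≥ 0. If X ≻_ε Y, then for every real number ε' > ε there exists a Borel measurable map f : supp m_X → supp m_Y that is 1-Lipschitz up to 2ε' and satisfies d_P(f_* m_X, m_Y) ≤ 2ε' (i.e. X ≻^{KY}_{2ε'} Y). -/

import Mathlib

open MeasureTheory Topology Filter Set Metric ENNReal

noncomputable section

/-- The support of a Borel measure: points all of whose open neighborhoods have
positive measure. -/
def msupport {X : Type*} [TopologicalSpace X] [MeasurableSpace X] (μ : Measure X) : Set X :=
  {x | ∀ U : Set X, IsOpen U → x ∈ U → 0 < μ U}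

/-- `dis_≻ S = sup { d_Y(y,y') − d_X(x,x') : (x,y),(x',y') ∈ S }`, with `dis_≻ ∅ = 0`. -/
def disSucc {X Y : Type*} [MetricSpace X] [MetricSpace Y] (S : Set (X × Y)) : ℝ≥0∞ :=
  ⨆ p ∈ S, ⨆ q ∈ S, ENNReal.ofReal (dist p.2 q.2 - dist p.1 q.1)

/-- `dis S = sup { |d_X(x,x') − d_Y(y,y')| : (x,y),(x',y') ∈ S }`, with `dis ∅ = 0`. -/
def disBox {X Y : Type*} [MetricSpace X] [MetricSpace Y] (S : Set (X × Y)) : ℝ≥0∞ :=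
  ⨆ p ∈ S, ⨆ q ∈ S, ENNReal.ofReal |dist p.1 q.1 - dist p.2 q.2|

/-- `π` is a coupling of `μ` and `ν`. -/
def IsCoupling {X Y : Type*} [MeasurableSpace X] [MeasurableSpace Y]
    (π : Measure (X × Y)) (μ : Measure X) (ν : Measure Y) : Prop :=
  IsProbabilityMeasure π ∧ π.map Prod.fst = μ ∧ π.map Prod.snd = ν

/-- `X ≻_ε Y`: the Lipschitz order with additive error `ε`. -/
def LipDomE {X Y : Type*} [MetricSpace X] [MetricSpace Y]
    [MeasurableSpace X] [MeasurableSpace Y]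
    (μ : Measure X) (ν : Measure Y) (ε : ℝ) : Prop :=
  ∃ π : Measure (X × Y), IsCoupling π μ ν ∧
    ∃ S : Set (X × Y), IsClosed S ∧ disSucc S ≤ ENNReal.ofReal ε ∧
      ENNReal.ofReal (1 - ε) ≤ π S

/-- `X ≻ Y`: the Lipschitz order. There is a 1-Lipschitz map
`f : supp m_X → supp m_Y` with `f_* m_X = m_Y`. -/
def LipOrder {X Y : Type*} [MetricSpace X] [MetricSpace Y]
    [MeasurableSpace X] [MeasurableSpace Y]
    (μ : Measure X) (ν : Measure Y) : Prop :=
  ∃ f : msupport μ → msupport ν, LipschitzWith 1 f ∧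
    ∀ A : Set Y, MeasurableSet A →
      μ (Subtype.val '' ((fun x => (f x : Y)) ⁻¹' A)) = ν A

/-- The box metric. -/
def boxDist {X Y : Type*} [MetricSpace X] [MetricSpace Y]
    [MeasurableSpace X] [MeasurableSpace Y]
    (μ : Measure X) (ν : Measure Y) : ℝ≥0∞ :=
  ⨅ (S : Set (X × Y)) (_ : IsClosed S) (π : Measure (X × Y)) (_ : IsCoupling π μ ν),
    max (disBox S) (1 - π S)

/-- The unilateral box metric `□_≻(X,Y) = inf { ε ≥ 0 : X ≻_ε Y }`. -/
def ubox {X Y : Type*} [MetricSpace X] [MetricSpace Y]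
    [MeasurableSpace X] [MeasurableSpace Y]
    (μ : Measure X) (ν : Measure Y) : ℝ :=
  sInf {ε : ℝ | 0 ≤ ε ∧ LipDomE μ ν ε}

/-- The Prokhorov metric
`d_P(μ,ν) = inf { ε > 0 : μ(U_ε(A)) ≥ ν(A) − ε for every Borel A }`. -/
def prokDist {Y : Type*} [MetricSpace Y] [MeasurableSpace Y] (μ ν : Measure Y) : ℝ :=
  sInf {ε : ℝ | 0 < ε ∧ ∀ A : Set Y, MeasurableSet A →
    ν A ≤ μ (Metric.thickening ε A) + ENNReal.ofReal ε}

/-- `f : supp m_X → supp m_Y` is 1-Lipschitz up to an additive error `ε`. -/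
def LipUpTo {X Y : Type*} [MetricSpace X] [MetricSpace Y]
    [MeasurableSpace X] [MeasurableSpace Y]
    (μ : Measure X) (ν : Measure Y) (f : msupport μ → msupport ν) (ε : ℝ) : Prop :=
  ∃ X₀ : Set X, MeasurableSet X₀ ∧ X₀ ⊆ msupport μ ∧
    ENNReal.ofReal (1 - ε) ≤ μ X₀ ∧
    ∀ x x' : msupport μ, (x : X) ∈ X₀ → (x' : X) ∈ X₀ →
      dist (f x : Y) (f x' : Y) ≤ dist (x : X) (x' : X) + ε

/-- `X ≻^{KY}_ε Y`: there is a Borel measurable map `f : supp m_X → supp m_Y`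
which is 1-Lipschitz up to `ε` and satisfies `d_P(f_* m_X, m_Y) ≤ ε`. -/
def KYDom {X Y : Type*} [MetricSpace X] [MetricSpace Y]
    [MeasurableSpace X] [MeasurableSpace Y]
    (μ : Measure X) (ν : Measure Y) (ε : ℝ) : Prop :=
  ∃ f : msupport μ → msupport ν, Measurable f ∧ LipUpTo μ ν f ε ∧
    prokDist (Measure.map (fun x => (f x : Y)) (Measure.comap Subtype.val μ)) ν ≤ ε

/-!
Take the coupling `π` and the closed set `S` with `π S ≥ 1 - ε` on which `d_Y ≤ d_X + ε`.
Cover the projection of `S` to `X` by countably many `r`-balls around points `x_n` having partners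
`(x_n, y_n) ∈ S`, and send each point to the partner `y_n` of the first ball containing it.
This map is Borel; on the union of the balls, which has `μ`-mass at least `1 - ε`, it satisfies
`d(f x, f x') ≤ d(x, x') + ε + 2r`; and it moves every `(x, y) ∈ S` to within `ε + r` of `y`,
whence `d_P(f_* μ, ν) ≤ ε + 2r`. Take `r = ε' - ε / 2`.
-/

section

variable {X Y : Type*}

section Support

variable [TopologicalSpace X] [MeasurableSpace X] (μ : Measure X)

lemma msupport_eq_support : msupport μ = μ.support := by
  ext x
  simp only [msupport, Measure.support_eq_forall_isOpen, mem_ofPred_eq]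
  exact forall_congr' fun U => forall_comm

lemma isClosed_msupport : IsClosed (msupport μ) :=
  msupport_eq_support μ ▸ Measure.isClosed_support

lemma measure_compl_msupport [HereditarilyLindelofSpace X] : μ (msupport μ)ᶜ = 0 :=
  msupport_eq_support μ ▸ Measure.measure_compl_support

lemma msupport_nonempty [HereditarilyLindelofSpace X] {μ : Measure X} (hμ : μ ≠ 0) :
    (msupport μ).Nonempty :=
  msupport_eq_support μ ▸ Measure.nonempty_support hμ

end Support

lemma disSucc_le_ofReal_iff [MetricSpace X] [MetricSpace Y] {S : Set (X × Y)} {ε : ℝ}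
    (hε : 0 ≤ ε) :
    disSucc S ≤ ENNReal.ofReal ε ↔ ∀ p ∈ S, ∀ q ∈ S, dist p.2 q.2 ≤ dist p.1 q.1 + ε := by
  simp only [disSucc, iSup₂_le_iff, ENNReal.ofReal_le_ofReal_iff hε, sub_le_iff_le_add']

lemma prokDist_le_of_forall [MetricSpace Y] [MeasurableSpace Y] {ρ ν : Measure Y} {δ : ℝ}
    (hδ : 0 < δ)
    (h : ∀ A : Set Y, MeasurableSet A → ν A ≤ ρ (thickening δ A) + ENNReal.ofReal δ) :
    prokDist ρ ν ≤ δ :=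
  csInf_le ⟨0, fun _ ht => ht.1.le⟩ ⟨hδ, h⟩

lemma prob_compl_le_ofReal [MeasurableSpace X] {μ : Measure X} [IsProbabilityMeasure μ]
    {s : Set X} (hs : MeasurableSet s) {ε : ℝ} (h : ENNReal.ofReal (1 - ε) ≤ μ s) :
    μ sᶜ ≤ ENNReal.ofReal ε :=
  calc μ sᶜ = 1 - μ s := prob_compl_eq_one_sub hs
    _ ≤ 1 - ENNReal.ofReal (1 - ε) := by gcongr
    _ ≤ ENNReal.ofReal ε :=
      tsub_le_iff_right.2 (by simpa using ENNReal.ofReal_add_le (p := ε) (q := 1 - ε))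

namespace IsCoupling

variable [MeasurableSpace X] [MeasurableSpace Y] {π : Measure (X × Y)} {μ : Measure X}
  {ν : Measure Y}

lemma measure_preimage_fst (hπ : IsCoupling π μ ν) {s : Set X} (hs : MeasurableSet s) :
    π (Prod.fst ⁻¹' s) = μ s := by
  rw [← hπ.2.1, Measure.map_apply measurable_fst hs]

lemma measure_preimage_snd (hπ : IsCoupling π μ ν) {t : Set Y} (ht : MeasurableSet t) :
    π (Prod.snd ⁻¹' t) = ν t := by
  rw [← hπ.2.2, Measure.map_apply measurable_snd ht]

lemma isProbabilityMeasure_right (hπ : IsCoupling π μ ν) : IsProbabilityMeasure ν := by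
  obtain ⟨_, -, rfl⟩ := hπ
  exact Measure.isProbabilityMeasure_map measurable_snd.aemeasurable

end IsCoupling

lemma map_comap_subtype_val_of_compl_null [MeasurableSpace X] [MeasurableSpace Y]
    {μ : Measure X} {s : Set X} (hs : MeasurableSet s) (hμs : μ sᶜ = 0) {g : X → Y}
    (hg : Measurable g) :
    (μ.comap ((↑) : s → X)).map (fun x : s => g x) = μ.map g := by
  rw [show (fun x : s => g x) = g ∘ (↑) from rfl, ← Measure.map_map hg measurable_subtype_coe,
    map_comap_subtype_coe hs, Measure.restrict_eq_self_of_ae_mem (mem_ae_iff.2 hμs)]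

lemma exists_measurable_near_section [PseudoMetricSpace X] [TopologicalSpace.SeparableSpace X]
    [MeasurableSpace X] [OpensMeasurableSpace X] [MeasurableSpace Y] (S : Set (X × Y)) {r : ℝ}
    (hr : 0 < r) (y₀ : Y) :
    ∃ (U : Set X) (F : X → Y), IsOpen U ∧ Measurable F ∧ Prod.fst '' S ⊆ U ∧
      (∀ x ∈ U, ∃ p ∈ S, dist x p.1 < r ∧ F x = p.2) ∧ ∀ x ∉ U, F x = y₀ := by
  classical
  rcases (Prod.fst '' S).eq_empty_or_nonempty with hS | ⟨x₀, hx₀⟩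
  · exact ⟨∅, fun _ => y₀, isOpen_empty, measurable_const, hS.le, by simp, fun _ _ => rfl⟩
  have : Nonempty (Prod.fst '' S) := ⟨⟨x₀, hx₀⟩⟩
  set c := TopologicalSpace.denseSeq (Prod.fst '' S)
  have hc : ∀ n, ∃ y, ((c n : X), y) ∈ S := fun n => by
    obtain ⟨p, hp, hpc⟩ := (c n).2
    exact ⟨p.2, hpc ▸ hp⟩
  choose b hb using hc
  set U := ⋃ n, ball (c n : X) r
  have hU : IsOpen U := isOpen_iUnion fun _ => isOpen_ball
  -- the disjunct `x ∉ U` only makes the search for a ball containing `x` total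
  have hfind : ∀ x, ∃ n, x ∈ ball (c n : X) r ∨ x ∉ U := fun x => by
    by_cases hx : x ∈ U
    · exact (mem_iUnion.1 hx).imp fun _ => Or.inl
    · exact ⟨0, Or.inr hx⟩
  refine ⟨U, fun x => if x ∈ U then b (Nat.find (hfind x)) else y₀,
    hU, ?_, ?_, fun x hx => ?_, fun x hx => if_neg hx⟩
  · refine Measurable.ite hU.measurableSet ?_ measurable_const
    exact Measurable.find (p := fun n x => x ∈ ball (c n : X) r ∨ x ∉ U)
      (fun _ => measurable_const) (fun _ => measurableSet_ball.union hU.measurableSet.compl) hfind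
  · intro x hx
    obtain ⟨n, hn⟩ := Metric.denseRange_iff.1
      (TopologicalSpace.denseRange_denseSeq (Prod.fst '' S)) ⟨x, hx⟩ r hr
    exact mem_iUnion.2 ⟨n, mem_ball.2 hn⟩
  · have hn := (Nat.find_spec (hfind x)).resolve_right (not_not.2 hx)
    exact ⟨_, hb (Nat.find (hfind x)), hn, if_pos hx⟩

lemma lipUpTo_of_forall_mem [MetricSpace X] [MeasurableSpace X] [OpensMeasurableSpace X]
    [HereditarilyLindelofSpace X] [MetricSpace Y] [MeasurableSpace Y] {μ : Measure X}
    {ν : Measure Y} {f : msupport μ → msupport ν} {U : Set X} (hU : MeasurableSet U) {ε : ℝ}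
    (hμU : ENNReal.ofReal (1 - ε) ≤ μ U)
    (hf : ∀ x x' : msupport μ, (x : X) ∈ U → (x' : X) ∈ U →
      dist (f x : Y) (f x' : Y) ≤ dist (x : X) (x' : X) + ε) :
    LipUpTo μ ν f ε :=
  ⟨U ∩ msupport μ, hU.inter (isClosed_msupport μ).measurableSet, inter_subset_right,
    by rwa [measure_inter_conull (measure_compl_msupport μ)], fun x x' hx hx' => hf x x' hx.1 hx'.1⟩

lemma prokDist_map_le_of_coupling [MeasurableSpace X] [MetricSpace Y] [MeasurableSpace Y]
    [OpensMeasurableSpace Y] {μ : Measure X} {ν : Measure Y} {π : Measure (X × Y)}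
    (hπ : IsCoupling π μ ν) {S : Set (X × Y)} (hS : MeasurableSet S) {ε δ : ℝ}
    (hπS : ENNReal.ofReal (1 - ε) ≤ π S) (hεδ : ε ≤ δ) (hδ : 0 < δ) {F : X → Y}
    (hF : Measurable F) (hFS : ∀ p ∈ S, dist (F p.1) p.2 < δ) :
    prokDist (μ.map F) ν ≤ δ := by
  have := hπ.1
  refine prokDist_le_of_forall hδ fun A hA => ?_
  have hsub : Prod.snd ⁻¹' A ∩ S ⊆ Prod.fst ⁻¹' (F ⁻¹' thickening δ A) :=
    fun p hp => mem_thickening_iff.2 ⟨p.2, hp.1, hFS p hp.2⟩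
  calc ν A = π (Prod.snd ⁻¹' A) := (hπ.measure_preimage_snd hA).symm
    _ ≤ π (Prod.snd ⁻¹' A ∩ S) + π Sᶜ :=
        (measure_le_inter_add_sdiff π _ _).trans (by gcongr; exact sdiff_subset_compl _ _)
    _ ≤ π (Prod.fst ⁻¹' (F ⁻¹' thickening δ A)) + ENNReal.ofReal ε :=
        add_le_add (measure_mono hsub) (prob_compl_le_ofReal hS hπS)
    _ = μ.map F (thickening δ A) + ENNReal.ofReal ε := by
        rw [hπ.measure_preimage_fst (hF isOpen_thickening.measurableSet),
          Measure.map_apply hF isOpen_thickening.measurableSet]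
    _ ≤ μ.map F (thickening δ A) + ENNReal.ofReal δ := by gcongr

theorem kyDom_of_coupling [MetricSpace X] [TopologicalSpace.SeparableSpace X]
    [MeasurableSpace X] [OpensMeasurableSpace X] [MetricSpace Y]
    [TopologicalSpace.SeparableSpace Y] [MeasurableSpace Y] [OpensMeasurableSpace Y]
    {μ : Measure X} {ν : Measure Y} {π : Measure (X × Y)} (hπ : IsCoupling π μ ν)
    {S : Set (X × Y)} (hS : MeasurableSet S) {ε : ℝ} (hε : 0 ≤ ε)
    (hdis : ∀ p ∈ S, ∀ q ∈ S, dist p.2 q.2 ≤ dist p.1 q.1 + ε)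
    (hπS : ENNReal.ofReal (1 - ε) ≤ π S) {r : ℝ} (hr : 0 < r) :
    KYDom μ ν (ε + 2 * r) := by
  have := hπ.isProbabilityMeasure_right
  obtain ⟨y₀, hy₀⟩ := msupport_nonempty (NeZero.ne ν)
  set S' := S ∩ Prod.snd ⁻¹' msupport ν
  have hS' : MeasurableSet S' := hS.inter (measurable_snd (isClosed_msupport ν).measurableSet)
  have hπS' : ENNReal.ofReal (1 - ε) ≤ π S' := by
    rwa [measure_inter_conull (by rw [← preimage_compl,
      hπ.measure_preimage_snd (isClosed_msupport ν).measurableSet.compl, measure_compl_msupport])]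
  obtain ⟨U, F, hU, hF, hSU, hFU, hFUc⟩ := exists_measurable_near_section S' hr y₀
  have hF_mem : ∀ x, F x ∈ msupport ν := fun x => by
    by_cases hx : x ∈ U
    · obtain ⟨p, hp, -, hFx⟩ := hFU x hx
      exact hFx ▸ hp.2
    · exact hFUc x hx ▸ hy₀
  have hFS' : ∀ q ∈ S', dist (F q.1) q.2 < ε + 2 * r := fun q hq => by
    obtain ⟨p, hp, hqp, hFq⟩ := hFU q.1 (hSU (mem_image_of_mem _ hq))
    rw [hFq]
    linarith [hdis p hp.1 q hq.1, dist_comm q.1 p.1]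
  refine ⟨fun x => ⟨F x, hF_mem x⟩, (hF.comp measurable_subtype_coe).subtype_mk,
    lipUpTo_of_forall_mem hU.measurableSet ?_ ?_, ?_⟩
  · calc ENNReal.ofReal (1 - (ε + 2 * r)) ≤ ENNReal.ofReal (1 - ε) :=
          ENNReal.ofReal_le_ofReal (by linarith)
      _ ≤ π S' := hπS'
      _ ≤ π (Prod.fst ⁻¹' U) := measure_mono fun p hp => hSU (mem_image_of_mem _ hp)
      _ = μ U := hπ.measure_preimage_fst hU.measurableSet
  · intro x x' hx hx'
    obtain ⟨p, hp, hxp, hFx⟩ := hFU x hx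
    obtain ⟨p', hp', hxp', hFx'⟩ := hFU x' hx'
    show dist (F x) (F x') ≤ dist (x : X) x' + (ε + 2 * r)
    rw [hFx, hFx']
    linarith [hdis p hp.1 p' hp'.1, dist_triangle4 p.1 x x' p'.1, dist_comm (x : X) p.1]
  · rw [map_comap_subtype_val_of_compl_null (isClosed_msupport μ).measurableSet
      (measure_compl_msupport μ) hF]
    exact prokDist_map_le_of_coupling hπ hS' hπS' (by linarith) (by positivity) hF hFS'

end

theorem kyDom_of_lipDomE_general {X Y : Type*} [MetricSpace X]
    [TopologicalSpace.SeparableSpace X] [MeasurableSpace X] [BorelSpace X]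
    [MetricSpace Y] [TopologicalSpace.SeparableSpace Y]
    [MeasurableSpace Y] [BorelSpace Y]
    (μ : Measure X) (ν : Measure Y) (ε : ℝ) (hε : 0 ≤ ε)
    (h : LipDomE μ ν ε) :
    ∀ ε' : ℝ, ε < ε' → KYDom μ ν (2 * ε') := by
  intro ε' hε'
  obtain ⟨π, hπ, S, hS, hdis, hπS⟩ := h
  have hKY := kyDom_of_coupling hπ hS.measurableSet hε ((disSucc_le_ofReal_iff hε).1 hdis) hπS
    (r := ε' - ε / 2) (by linarith)
  rwa [show ε + 2 * (ε' - ε / 2) = 2 * ε' by ring] at hKY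

/-- If `X ≻_ε Y`, then `X ≻^KY_(2ε') Y` for every `ε' > ε`. -/
theorem kyDom_of_lipDomE {X Y : Type*} [MetricSpace X] [CompleteSpace X]
    [TopologicalSpace.SeparableSpace X] [MeasurableSpace X] [BorelSpace X]
    [MetricSpace Y] [CompleteSpace Y] [TopologicalSpace.SeparableSpace Y]
    [MeasurableSpace Y] [BorelSpace Y]
    (μ : Measure X) (ν : Measure Y) [IsProbabilityMeasure μ] [IsProbabilityMeasure ν] (ε : ℝ) (hε : 0 ≤ ε)
    (h : LipDomE μ ν ε) :
    ∀ ε' : ℝ, ε < ε' → KYDom μ ν (2 * ε') :=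
  kyDom_of_lipDomE_general μ ν ε hε h
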